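/- In the reduced free group RF_n, for a fixed index j let RF_{n-1}^{(j)} be the subgroup generated by the x_k with k ≠ j. If λ, λ' ∈ RF_{n-1}^{(j)} satisfy λ⁻¹ x_j λ = λ'⁻¹ x_j λ', then λ = λ'. (Uniqueness of the conjugating element lying in the subgroup omitting x_j.) -/

import Mathlib

open scoped commutatorElement

/-- The defining relators of the reduced free group: commutators of a generator
with any conjugate of itself. -/
def RFrel (n : ℕ) : Set (FreeGroup (Fin n)) :=
  {w | ∃ (i : Fin n) (g : FreeGroup (Fin n)),
    w = ⁅FreeGroup.of i, g * FreeGroup.of i * g⁻¹⁆}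

/-- The reduced free group on `n` generators. -/
def RF (n : ℕ) : Type := FreeGroup (Fin n) ⧸ Subgroup.normalClosure (RFrel n)

instance (n : ℕ) : Group (RF n) := QuotientGroup.Quotient.group _

/-- The image of the `i`-th generator in the reduced free group. -/
def x {n : ℕ} (i : Fin n) : RF n := QuotientGroup.mk (FreeGroup.of i)

/-!
Milnor's Magnus representation `magnus : RF n → (ReducedRing (Fin n))ˣ`, `x i ↦ 1 + X i`, takes
values in the integral noncommutative polynomials modulo the monomials with a repeated letter, and
it is injective. Deleting a generator `x i` commutes with `magnus`, so by induction on the set of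
generators it suffices to treat elements killed by the deletion. These are products of conjugates
`w x_i w⁻¹` by repetition-free positive words `w`; such conjugates commute, on them `magnus - 1` is
additive, and its values are linearly independent by a triangularity argument on the coefficients
of the words `w x_i`.

In the theorem, `c = l l'⁻¹` lies in the subgroup generated by the `x k`, `k ≠ j`, and commutes with
`x j`. Then `magnus c` has a representative without the letter `j` that commutes with `X j`;
comparing coefficients of the words ending in `j` shows that it is constant, hence `1`, so `c = 1`.
-/

noncomputable section

open scoped Classical

theorem MonoidAlgebra.coeff_mul_eq_zero_of_forall {R M : Type*} [Semiring R] [Monoid M]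
    {f g : MonoidAlgebra R M} {m : M} (h : ∀ a b, a * b = m → f.coeff a = 0 ∨ g.coeff b = 0) :
    (f * g).coeff m = 0 := by
  rw [MonoidAlgebra.coeff_mul]
  refine Finset.sum_eq_zero fun a _ => Finset.sum_eq_zero fun b _ => ?_
  dsimp only
  split_ifs with hab
  · rcases h a b hab with h | h <;> simp [h]
  · rfl

section FreeAlgebra

variable {α : Type*}

local notation "ℤ⟨" α "⟩" => MonoidAlgebra ℤ (FreeMonoid α)

def VanishesOnNodup (f : ℤ⟨α⟩) : Prop :=
  ∀ w : FreeMonoid α, w.toList.Nodup → f.coeff w = 0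

theorem VanishesOnNodup.mul_right {f : ℤ⟨α⟩} (hf : VanishesOnNodup f) (g : ℤ⟨α⟩) :
    VanishesOnNodup (f * g) := fun w hw =>
  MonoidAlgebra.coeff_mul_eq_zero_of_forall fun a b hab => .inl <| hf a <|
    (List.sublist_append_left _ _).nodup (by rwa [← FreeMonoid.toList_mul, hab])

theorem VanishesOnNodup.mul_left {f : ℤ⟨α⟩} (hf : VanishesOnNodup f) (g : ℤ⟨α⟩) :
    VanishesOnNodup (g * f) := fun w hw =>
  MonoidAlgebra.coeff_mul_eq_zero_of_forall fun a b hab => .inr <| hf b <|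
    (List.sublist_append_right _ _).nodup (by rwa [← FreeMonoid.toList_mul, hab])

def deleteLetters (s : Set α) : ℤ⟨α⟩ →ₐ[ℤ] ℤ⟨α⟩ :=
  MonoidAlgebra.lift ℤ _ _ (FreeMonoid.lift fun a => if a ∈ s then 0 else .single (.of a) 1)

theorem deleteLetters_single (s : Set α) (w : FreeMonoid α) (c : ℤ) :
    deleteLetters s (.single w c) = if ∃ a ∈ w.toList, a ∈ s then 0 else .single w c := by
  have hword : ∀ w : FreeMonoid α, FreeMonoid.lift (fun a => if a ∈ s then 0 else
      (MonoidAlgebra.single (FreeMonoid.of a) 1 : ℤ⟨α⟩)) w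
      = if ∃ a ∈ w.toList, a ∈ s then 0 else .single w 1 := by
    intro w
    induction w using FreeMonoid.inductionOn' with
    | one => simp [MonoidAlgebra.one_def]
    | of_mul a w ih =>
      rw [map_mul, FreeMonoid.lift_eval_of, ih]
      by_cases ha : a ∈ s <;> by_cases hw : ∃ b ∈ w.toList, b ∈ s <;> simp_all
  rw [deleteLetters, MonoidAlgebra.lift_single, hword]
  split_ifs <;> simp

theorem coeff_deleteLetters (s : Set α) (f : ℤ⟨α⟩) (u : FreeMonoid α) :
    (deleteLetters s f).coeff u = if ∃ a ∈ u.toList, a ∈ s then 0 else f.coeff u := by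
  induction f using MonoidAlgebra.induction_linear with
  | zero => simp
  | add f g hf hg =>
    simp only [map_add, MonoidAlgebra.coeff_add, Finsupp.add_apply, hf, hg]
    split_ifs <;> simp
  | single w c =>
    rw [deleteLetters_single]
    by_cases hwu : w = u
    · subst hwu; split_ifs <;> simp
    · split_ifs <;> simp [hwu]

theorem deleteLetters_deleteLetters (s : Set α) (f : ℤ⟨α⟩) :
    deleteLetters s (deleteLetters s f) = deleteLetters s f := by
  ext u
  simp only [coeff_deleteLetters]
  split_ifs <;> rfl

def wordExpansion (w : List α) : ℤ⟨α⟩ :=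
  (w.map fun a => 1 + .single (.of a) 1).prod

def wordInvExpansion (w : List α) : ℤ⟨α⟩ :=
  (w.reverse.map fun a => 1 - .single (.of a) 1).prod

theorem coeff_wordExpansion {w : List α} (hw : w.Nodup) (u : FreeMonoid α) :
    (wordExpansion w).coeff u = if u.toList.Sublist w then 1 else 0 := by
  induction w generalizing u with
  | nil =>
    have hu1 : u.toList = [] ↔ 1 = u := by
      rw [eq_comm, ← FreeMonoid.toList_one (α := α), FreeMonoid.toList.injective.eq_iff]
    simp [wordExpansion, MonoidAlgebra.one_def, Finsupp.single_apply, List.sublist_nil, hu1]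
  | cons a w ih =>
    obtain ⟨haw, hw⟩ := List.nodup_cons.mp hw
    simp only [wordExpansion, List.map_cons, List.prod_cons] at ih ⊢
    rw [add_mul, one_mul, MonoidAlgebra.coeff_add, Finsupp.add_apply, ih hw]
    by_cases hu : ∃ t, u = .of a * t
    · obtain ⟨t, rfl⟩ := hu
      have hat : ¬(FreeMonoid.of a * t).toList.Sublist w := fun h => haw (h.subset (by simp))
      rw [MonoidAlgebra.coeff_single_mul_mul, one_mul, ih hw, if_neg hat, zero_add]
      simp
    · rw [MonoidAlgebra.coeff_single_mul_of_forall_mul_ne _ _ fun d hd => hu ⟨d, hd.symm⟩,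
        add_zero]
      refine if_congr ?_ rfl rfl
      rw [List.sublist_cons_iff, iff_self_or]
      rintro ⟨r, hr, -⟩
      exact absurd ⟨.ofList r, FreeMonoid.toList.injective (by simp [hr])⟩ hu

theorem deleteLetters_wordInvExpansion {a : α} {w : List α} (haw : a ∉ w) :
    deleteLetters {a} (wordInvExpansion w) = wordInvExpansion w := by
  simp only [wordInvExpansion, map_list_prod, List.map_map]
  congr 1
  refine List.map_congr_left fun b hb => ?_
  have hba : b ≠ a := fun h => haw (h ▸ List.mem_reverse.mp hb)
  simp [deleteLetters_single, hba]

theorem coeff_one_wordInvExpansion (w : List α) : (wordInvExpansion w).coeff 1 = 1 := by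
  have h : deleteLetters Set.univ (wordInvExpansion w) = 1 := by
    simp [wordInvExpansion, map_list_prod, Function.comp_def, deleteLetters_single]
  simpa [coeff_deleteLetters] using congrArg (·.coeff 1) h

theorem coeff_mul_single_mul_of_deleteLetters_eq {a : α} (F : ℤ⟨α⟩) {G : ℤ⟨α⟩}
    (hG : deleteLetters {a} G = G) (u : FreeMonoid α) :
    (F * .single (.of a) 1 * G).coeff (u * .of a) = F.coeff u * G.coeff 1 := by
  set G' := G - .single 1 (G.coeff 1)
  suffices (F * .single (.of a) 1 * G').coeff (u * .of a) = 0 by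
    rw [← add_sub_cancel (.single 1 (G.coeff 1)) G, mul_add, MonoidAlgebra.coeff_add,
      Finsupp.add_apply, this, MonoidAlgebra.coeff_mul_single_one,
      MonoidAlgebra.coeff_mul_single_mul]
    simp
  refine MonoidAlgebra.coeff_mul_eq_zero_of_forall fun p q hpq => ?_
  by_cases hq1 : q = 1
  · exact .inr (by simp [G', hq1])
  by_cases haq : a ∈ q.toList
  · refine .inr ?_
    rw [MonoidAlgebra.coeff_sub, Finsupp.sub_apply, ← hG, coeff_deleteLetters,
      if_pos ⟨a, haq, rfl⟩]
    simp [Ne.symm hq1]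
  -- otherwise the last letter `a` of `u * of a` would be the last letter of `q`
  refine .inl (MonoidAlgebra.coeff_mul_single_of_forall_mul_ne _ _ fun d hd => haq ?_)
  obtain ⟨q', b, hq'⟩ := (List.eq_nil_or_concat' q.toList).resolve_left
    fun h => hq1 (FreeMonoid.toList.injective h)
  have h := congrArg FreeMonoid.toList hpq
  rw [← hd, FreeMonoid.toList_mul, FreeMonoid.toList_mul, hq', FreeMonoid.toList_mul,
    ← List.append_assoc] at h
  have hba : [b] = [a] := (List.append_inj' h rfl).2
  rw [List.singleton_inj] at hba
  simp [hq', hba]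

variable (α) in
def nodupVanishingIdeal : TwoSidedIdeal (ℤ⟨α⟩) :=
  .mk' {f | VanishesOnNodup f} (fun _ _ => rfl)
    (fun hf hg w hw => by simp [hf w hw, hg w hw]) (fun hf w hw => by simp [hf w hw])
    (fun hf => hf.mul_left _) (fun hf => hf.mul_right _)

variable (α) in
abbrev ReducedRing := (nodupVanishingIdeal α).ringCon.Quotient

namespace ReducedRing

def mk : ℤ⟨α⟩ →+* ReducedRing α := RingCon.mk' _

theorem mk_surjective : Function.Surjective (mk (α := α)) := RingCon.mk'_surjective _

theorem mk_eq_mk_iff {f g : ℤ⟨α⟩} : mk f = mk g ↔ VanishesOnNodup (f - g) :=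
  (RingCon.eq _).trans ((TwoSidedIdeal.rel_iff _ _ _).trans (TwoSidedIdeal.mem_mk' ..))

theorem mk_eq_zero_iff {f : ℤ⟨α⟩} : mk f = 0 ↔ VanishesOnNodup f := by
  rw [← map_zero mk, mk_eq_mk_iff, sub_zero]

theorem coeff_eq_of_mk_eq {f g : ℤ⟨α⟩} (h : mk f = mk g)
    {w : FreeMonoid α} (hw : w.toList.Nodup) : f.coeff w = g.coeff w :=
  sub_eq_zero.mp (by simpa using mk_eq_mk_iff.mp h w hw)

def X (a : α) : ReducedRing α := mk (.single (.of a) 1)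

def delete (s : Set α) : ReducedRing α →+* ReducedRing α :=
  RingCon.lift _ (mk.comp (deleteLetters s).toRingHom) fun f g h => by
    rw [RingCon.ker_apply]
    refine mk_eq_mk_iff.mpr fun u hu => ?_
    rw [← map_sub]
    simp only [AlgHom.toRingHom_eq_coe, RingHom.coe_coe, coeff_deleteLetters]
    split_ifs
    · rfl
    · exact mk_eq_mk_iff.mp ((RingCon.eq _).mpr h) u hu

theorem delete_mk (s : Set α) (f : ℤ⟨α⟩) :
    delete s (mk f) = mk (deleteLetters s f) := rfl

theorem delete_X (s : Set α) (a : α) : delete s (X a) = if a ∈ s then 0 else X a := by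
  rw [X, delete_mk, deleteLetters_single]
  split_ifs <;> simp_all

theorem delete_X_self (a : α) : delete {a} (X a) = 0 := by simp [delete_X]

theorem mul_eq_zero_of_delete_eq_zero {a : α} {r r' : ReducedRing α}
    (hr : delete {a} r = 0) (hr' : delete {a} r' = 0) : r * r' = 0 := by
  obtain ⟨f, rfl⟩ := mk_surjective r
  obtain ⟨g, rfl⟩ := mk_surjective r'
  have vanish : ∀ {h : ℤ⟨α⟩}, delete {a} (mk h) = 0 →
      ∀ u : FreeMonoid α, u.toList.Nodup → a ∉ u.toList → h.coeff u = 0 := by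
    intro h hh u hu hau
    simpa [coeff_deleteLetters, hau] using mk_eq_zero_iff.mp hh u hu
  rw [← map_mul, mk_eq_zero_iff]
  intro w hw
  refine MonoidAlgebra.coeff_mul_eq_zero_of_forall fun u v huv => ?_
  rw [← huv, FreeMonoid.toList_mul, List.nodup_append] at hw
  by_cases hau : a ∈ u.toList
  · exact .inr (vanish hr' v hw.2.1 fun hav => hw.2.2 a hau a hav rfl)
  · exact .inl (vanish hr u hw.1 hau)

theorem X_mul_X (a : α) : X a * X a = 0 :=
  mul_eq_zero_of_delete_eq_zero (delete_X_self a) (delete_X_self a)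

def magnusUnit (a : α) : (ReducedRing α)ˣ where
  val := 1 + X a
  inv := 1 - X a
  val_inv := by simp [add_mul, mul_sub, X_mul_X]
  inv_val := by simp [sub_mul, mul_add, X_mul_X]

theorem commute_magnusUnit_conj (a : α) (U : (ReducedRing α)ˣ) :
    Commute (magnusUnit a) (U * magnusUnit a * U⁻¹) := by
  set Y : ReducedRing α := U * X a * ↑U⁻¹
  have hY : delete {a} Y = 0 := by simp [Y, delete_X_self]
  have hXY : Commute (X a) Y :=
    (mul_eq_zero_of_delete_eq_zero (delete_X_self a) hY).trans
      (mul_eq_zero_of_delete_eq_zero hY (delete_X_self a)).symm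
  rw [← Commute.units_val_iff]
  have hconj : ((U * magnusUnit a * U⁻¹ : (ReducedRing α)ˣ) : ReducedRing α) = 1 + Y := by
    simp [Y, magnusUnit, mul_add, add_mul]
  rw [hconj]
  exact (Commute.one_left _).add_left ((Commute.one_right _).add_right hXY)

-- Comparing coefficients of `u * of j` in `f X_j = X_j f` kills every coefficient of `f` at a
-- nonempty word avoiding `j`.
theorem mk_eq_one_of_commute_X {j : α} {f : ℤ⟨α⟩}
    (hfj : deleteLetters {j} f = f) (hcomm : Commute (mk f) (X j))
    (hone : delete Set.univ (mk f) = 1) : mk f = 1 := by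
  have hconst : ∀ u : FreeMonoid α, u.toList.Nodup → u ≠ 1 → f.coeff u = 0 := by
    intro u hu hu1
    by_cases hju : j ∈ u.toList
    · rw [← hfj, coeff_deleteLetters, if_pos ⟨j, hju, rfl⟩]
    have huj : (u * .of j).toList.Nodup := by
      simpa [List.nodup_append, hu] using fun a ha (h : a = j) => hju (h ▸ ha)
    have h := coeff_eq_of_mk_eq (f := f * .single (.of j) 1) (g := .single (.of j) 1 * f)
      (by simpa [X] using hcomm.eq) huj
    rwa [MonoidAlgebra.coeff_mul_single_mul, mul_one,
      MonoidAlgebra.coeff_single_mul_of_forall_mul_ne] at h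
    intro d hd
    obtain ⟨b, t, hbt⟩ :=
      List.exists_cons_of_ne_nil fun h => hu1 (FreeMonoid.toList.injective h)
    have hjb : j = b := by simpa [hbt] using congrArg (·.toList.head?) hd
    exact hju (by simp [hbt, hjb])
  rw [← hone, delete_mk, mk_eq_mk_iff]
  intro u hu
  rw [MonoidAlgebra.coeff_sub, Finsupp.sub_apply, coeff_deleteLetters]
  split_ifs with h
  · obtain ⟨a, ha, -⟩ := h
    exact (sub_zero _).trans (hconst u hu (by rintro rfl; simp at ha))
  · exact sub_self _

theorem mk_wordExpansion (w : List α) :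
    mk (wordExpansion w) = ((w.map magnusUnit).prod : (ReducedRing α)ˣ) := by
  rw [wordExpansion, map_list_prod, ← Units.coeHom_apply, map_list_prod, List.map_map,
    List.map_map]
  rfl

theorem mk_wordInvExpansion (w : List α) :
    mk (wordInvExpansion w) = (((w.map magnusUnit).prod)⁻¹ : (ReducedRing α)ˣ) := by
  rw [wordInvExpansion, map_list_prod, List.prod_inv_reverse, ← Units.coeHom_apply,
    map_list_prod]
  simp only [List.map_reverse, List.map_map]
  congr 2

-- Triangularity: the coefficient of `w₀ a` in the term of `w` is `1` if `w₀ <+ w` and `0`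
-- otherwise; a word `w₀` of maximal length in the support of a relation gives a contradiction.
theorem linearIndependent_conj_X (a : α) :
    LinearIndependent ℤ fun w : {w : List α // w.Nodup ∧ a ∉ w} =>
      mk (wordExpansion w.1 * .single (.of a) 1 * wordInvExpansion w.1) := by
  rw [linearIndependent_iff]
  intro e he
  by_contra hne
  obtain ⟨w₀, hw₀, hmax⟩ := Finset.exists_max_image e.support (fun w => w.1.length)
    (Finsupp.support_nonempty_iff.mpr hne)
  obtain ⟨hnd₀, ha₀⟩ := w₀.2
  have hu₀ : (FreeMonoid.ofList w₀.1 * .of a).toList.Nodup := by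
    simp only [FreeMonoid.toList_mul, FreeMonoid.toList_ofList, FreeMonoid.toList_of,
      List.nodup_append, hnd₀, List.nodup_singleton, true_and]
    rintro b hb _ hc rfl
    exact ha₀ (List.mem_singleton.mp hc ▸ hb)
  have hcoeff : ∀ w : {w : List α // w.Nodup ∧ a ∉ w},
      (wordExpansion w.1 * .single (.of a) 1 * wordInvExpansion w.1).coeff
        (.ofList w₀.1 * .of a) = if w₀.1.Sublist w.1 then 1 else 0 := fun w => by
    rw [coeff_mul_single_mul_of_deleteLetters_eq _ (deleteLetters_wordInvExpansion w.2.2),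
      coeff_wordExpansion w.2.1, coeff_one_wordInvExpansion, mul_one, FreeMonoid.toList_ofList]
  rw [Finsupp.linearCombination_apply, Finsupp.sum] at he
  simp_rw [← map_zsmul, ← map_sum, mk_eq_zero_iff] at he
  have h₀ := he _ hu₀
  rw [MonoidAlgebra.coeff_sum, Finset.sum_apply', Finset.sum_eq_single w₀] at h₀
  · rw [MonoidAlgebra.coeff_smul_apply, hcoeff, if_pos (List.Sublist.refl _), smul_eq_mul,
      mul_one] at h₀
    exact Finsupp.mem_support_iff.mp hw₀ h₀
  · intro w hw hne
    rw [MonoidAlgebra.coeff_smul_apply, hcoeff, if_neg, smul_zero]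
    exact fun h => hne (Subtype.ext (h.eq_of_length_le (hmax w hw)).symm)
  · exact fun h => absurd hw₀ h

end ReducedRing

end FreeAlgebra

theorem commutatorElement_mul_of_mem {G : Type*} [Group G] {N : Subgroup G} [N.Normal]
    [IsMulCommutative N] {a b : G} (ha : a ∈ N) (hb : b ∈ N) (g : G) :
    ⁅a * b, g⁆ = ⁅a, g⁆ * ⁅b, g⁆ := by
  have hmem : ∀ {c}, c ∈ N → ⁅c, g⁆ ∈ N := fun hc => by
    rw [commutatorElement_def, mul_assoc, mul_assoc]
    exact mul_mem hc (by simpa [mul_assoc] using Subgroup.Normal.conj_mem ‹_› _ (inv_mem hc) g)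
  calc ⁅a * b, g⁆ = a * ⁅b, g⁆ * a⁻¹ * ⁅a, g⁆ := by
        simp only [commutatorElement_def]; group
    _ = ⁅b, g⁆ * ⁅a, g⁆ := by rw [setLike_mul_comm ha (hmem hb)]; group
    _ = ⁅a, g⁆ * ⁅b, g⁆ := setLike_mul_comm (hmem hb) (hmem ha)

theorem List.exists_eq_append_cons_append_cons_of_not_nodup {β : Type*} {l : List β}
    (hl : ¬l.Nodup) : ∃ p k q r, l = p ++ k :: (q ++ k :: r) := by
  induction l with
  | nil => exact absurd List.nodup_nil hl
  | cons a t ih =>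
    by_cases hat : a ∈ t
    · obtain ⟨q, r, rfl⟩ := List.append_of_mem hat
      exact ⟨[], a, q, r, rfl⟩
    · obtain ⟨p, k, q, r, rfl⟩ := ih fun ht => hl (List.nodup_cons.mpr ⟨hat, ht⟩)
      exact ⟨a :: p, k, q, r, rfl⟩

namespace RF

variable {n : ℕ}

theorem x_commute_conj (i : Fin n) (g : RF n) : Commute (x i) (g * x i * g⁻¹) := by
  obtain ⟨f, rfl⟩ := QuotientGroup.mk_surjective g
  rw [← commutatorElement_eq_one_iff_commute]
  exact (QuotientGroup.eq_one_iff _).mpr (Subgroup.subset_normalClosure ⟨i, f, rfl⟩)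

def lift {G : Type*} [Group G] (f : Fin n → G)
    (hf : ∀ i (g : G), Commute (f i) (g * f i * g⁻¹)) : RF n →* G :=
  QuotientGroup.lift _ (FreeGroup.lift f) <| Subgroup.normalClosure_le_normal <| by
    rintro _ ⟨i, g, rfl⟩
    simpa [commutatorElement_eq_one_iff_commute] using hf i (FreeGroup.lift f g)

theorem lift_x {G : Type*} [Group G] (f : Fin n → G) (hf) (i : Fin n) : lift f hf (x i) = f i :=
  FreeGroup.lift_apply_of

theorem hom_ext {G : Type*} [Group G] {φ ψ : RF n →* G} (h : ∀ i, φ (x i) = ψ (x i)) :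
    φ = ψ :=
  QuotientGroup.monoidHom_ext _ (FreeGroup.ext_hom _ _ h)

theorem closure_range_x : Subgroup.closure (Set.range (x (n := n))) = ⊤ := by
  refine (Subgroup.eq_top_iff' _).mpr fun c => ?_
  obtain ⟨f, rfl⟩ := QuotientGroup.mk_surjective c
  induction f using FreeGroup.induction_on with
  | C1 => exact one_mem _
  | of i => exact Subgroup.subset_closure ⟨i, rfl⟩
  | inv_of i h => exact inv_mem h
  | mul f g hf hg => exact mul_mem hf hg

def delete (s : Set (Fin n)) : RF n →* RF n :=
  lift (fun k => if k ∈ s then 1 else x k) fun k g => by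
    split_ifs
    · simp
    · exact x_commute_conj k g

theorem delete_x (s : Set (Fin n)) (k : Fin n) : delete s (x k) = if k ∈ s then 1 else x k :=
  lift_x ..

theorem delete_univ : delete (Set.univ : Set (Fin n)) = 1 :=
  hom_ext fun k => by simp [delete_x]

theorem delete_mem_closure {i : Fin n} {T : Set (Fin n)} {c : RF n}
    (hc : c ∈ Subgroup.closure (x '' insert i T)) :
    delete {i} c ∈ Subgroup.closure (x '' T) := by
  rw [← Subgroup.mem_comap]
  refine Subgroup.closure_le _ |>.mpr ?_ hc
  rintro _ ⟨k, hk, rfl⟩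
  rw [SetLike.mem_coe, Subgroup.mem_comap, delete_x]
  split_ifs with hki
  · exact one_mem _
  · exact Subgroup.subset_closure ⟨k, (Set.mem_insert_iff.mp hk).resolve_left hki, rfl⟩

theorem delete_eq_self {i : Fin n} {T : Set (Fin n)} (hi : i ∉ T) {c : RF n}
    (hc : c ∈ Subgroup.closure (x '' T)) : delete {i} c = c := by
  refine MonoidHom.eqOn_closure (f := delete {i}) (g := MonoidHom.id _) ?_ hc
  rintro _ ⟨k, hk, rfl⟩
  simp [delete_x, show k ≠ i from fun h => hi (h ▸ hk)]

def magnus : RF n →* (ReducedRing (Fin n))ˣ :=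
  lift ReducedRing.magnusUnit ReducedRing.commute_magnusUnit_conj

theorem magnus_x (i : Fin n) : magnus (x i) = ReducedRing.magnusUnit i := lift_x ..

theorem magnus_list_prod (w : List (Fin n)) :
    magnus (w.map x).prod = (w.map ReducedRing.magnusUnit).prod := by
  simp [map_list_prod, magnus_x, Function.comp_def]

theorem magnus_delete (s : Set (Fin n)) (c : RF n) :
    (magnus (delete s c) : ReducedRing (Fin n)) = ReducedRing.delete s (magnus c) := by
  have h : magnus.comp (delete s) = (Units.map (ReducedRing.delete s).toMonoidHom).comp magnus :=
    hom_ext fun k => Units.ext <| by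
      by_cases hk : k ∈ s <;>
        simp [delete_x, magnus_x, hk, ReducedRing.magnusUnit, ReducedRing.delete_X]
  exact congrArg Units.val (DFunLike.congr_fun h c)

theorem delete_univ_magnus (c : RF n) :
    ReducedRing.delete Set.univ (magnus c : ReducedRing (Fin n)) = 1 := by
  rw [← magnus_delete, delete_univ, MonoidHom.one_apply, map_one, Units.val_one]

theorem conj_x_commute_conj_x (i : Fin n) (g h : RF n) :
    Commute (g * x i * g⁻¹) (h * x i * h⁻¹) := by
  simpa [mul_assoc] using (x_commute_conj i (g⁻¹ * h)).map (MulAut.conj g)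

instance (i : Fin n) : IsMulCommutative (Subgroup.normalClosure {x i}) :=
  Subgroup.isMulCommutative_closure <| by
    simp only [Group.mem_conjugatesOfSet_iff, Set.mem_singleton_iff, exists_eq_left, isConj_iff]
    rintro _ ⟨g, rfl⟩ _ ⟨h, rfl⟩
    exact conj_x_commute_conj_x i g h

theorem delete_eq_one_of_mem_normalClosure {i : Fin n} {m : RF n}
    (hm : m ∈ Subgroup.normalClosure {x i}) : delete {i} m = 1 :=
  Subgroup.normalClosure_le_normal (N := (delete {i}).ker) (by simp [delete_x]) hm

-- On the normal closure of `x i`, `magnus - 1` takes values killed by `ReducedRing.delete {i}`,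
-- and any two such values multiply to zero.
def magnusLog (i : Fin n) :
    Subgroup.normalClosure {x i} →* Multiplicative (ReducedRing (Fin n)) where
  toFun m := .ofAdd ((magnus (m : RF n) : ReducedRing (Fin n)) - 1)
  map_one' := by simp
  map_mul' m m' := by
    have hdel : ∀ m : Subgroup.normalClosure {x i},
        ReducedRing.delete {i} ((magnus (m : RF n) : ReducedRing (Fin n)) - 1) = 0 := fun m => by
      rw [map_sub, ← magnus_delete, delete_eq_one_of_mem_normalClosure m.2]; simp
    have hsq := ReducedRing.mul_eq_zero_of_delete_eq_zero (hdel m) (hdel m')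
    rw [← ofAdd_add, Subgroup.coe_mul, map_mul, Units.val_mul]
    congr 1
    calc (magnus (m : RF n) : ReducedRing (Fin n)) * magnus (m' : RF n) - 1
        = (magnus (m : RF n) - 1) + (magnus (m' : RF n) - 1) +
            (magnus (m : RF n) - 1) * (magnus (m' : RF n) - 1) := by noncomm_ring
      _ = _ := by rw [hsq, add_zero]

def xConj (i : Fin n) (v : RF n) : RF n := v * x i * v⁻¹

theorem xConj_mem_normalClosure (i : Fin n) (v : RF n) :
    xConj i v ∈ Subgroup.normalClosure {x i} :=
  Subgroup.normalClosure_normal.conj_mem _ (Subgroup.subset_normalClosure (Set.mem_singleton _)) v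

theorem magnusLog_xConj (i : Fin n) (v : RF n) :
    magnusLog i ⟨xConj i v, xConj_mem_normalClosure i v⟩ =
      .ofAdd ((magnus v : ReducedRing (Fin n)) * ReducedRing.X i * ↑(magnus v)⁻¹) := by
  simp [magnusLog, xConj, magnus_x, ReducedRing.magnusUnit, mul_add, add_mul]

theorem xConj_mul_mul (i k : Fin n) (p s : RF n) {a b : RF n}
    (ha : a ∈ Subgroup.normalClosure {x k}) (hb : b ∈ Subgroup.normalClosure {x k}) :
    xConj i (p * (a * b) * s) =
      xConj i (p * a * s) * (xConj i (p * s))⁻¹ * xConj i (p * b * s) := by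
  have key : ∀ c, xConj i (p * c * s) =
      p * ⁅c, s * x i * s⁻¹⁆ * p⁻¹ * xConj i (p * s) := by
    intro c; simp only [xConj, commutatorElement_def]; group
  rw [key, key a, key b, commutatorElement_mul_of_mem ha hb]
  group

theorem xConj_inv_mul (i k : Fin n) (p s : RF n) {a : RF n}
    (ha : a ∈ Subgroup.normalClosure {x k}) :
    xConj i (p * a⁻¹ * s) = xConj i (p * s) * (xConj i (p * a * s))⁻¹ * xConj i (p * s) := by
  have h := xConj_mul_mul i k p s ha (inv_mem ha)
  rw [mul_inv_cancel, mul_one] at h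
  calc xConj i (p * a⁻¹ * s)
      = xConj i (p * s) * (xConj i (p * a * s))⁻¹ *
          (xConj i (p * a * s) * (xConj i (p * s))⁻¹ * xConj i (p * a⁻¹ * s)) := by group
    _ = _ := by rw [← h]

abbrev NodupWord (T : Set (Fin n)) : Type := {w : List (Fin n) // w.Nodup ∧ ∀ k ∈ w, k ∈ T}

def nodupConjSubgroup (i : Fin n) (T : Set (Fin n)) : Subgroup (RF n) :=
  Subgroup.closure <| Set.range fun w : NodupWord T => xConj i (w.1.map x).prod

-- A repeated letter `k` is removed by `xConj_mul_mul`, applied to the product `x k * (q x k q⁻¹)`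
-- of two elements of the abelian normal closure of `x k`.
theorem xConj_list_prod_mem_nodupConjSubgroup (i : Fin n) {T : Set (Fin n)} (P : List (Fin n))
    (hP : ∀ k ∈ P, k ∈ T) : xConj i (P.map x).prod ∈ nodupConjSubgroup i T := by
  induction hlen : P.length using Nat.strong_induction_on generalizing P with
  | _ N ih =>
  by_cases hnd : P.Nodup
  · exact Subgroup.subset_closure ⟨⟨P, hnd, hP⟩, rfl⟩
  obtain ⟨p, k, q, r, rfl⟩ := List.exists_eq_append_cons_append_cons_of_not_nodup hnd
  have shorter : ∀ L : List (Fin n), L.length < N → L ⊆ p ++ k :: (q ++ k :: r) →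
      xConj i (L.map x).prod ∈ nodupConjSubgroup i T :=
    fun L hL hLP => ih _ hL L (fun j hj => hP j (hLP hj)) rfl
  have hk : x k ∈ Subgroup.normalClosure {x k} := Subgroup.subset_normalClosure rfl
  have hsplit : ((p ++ k :: (q ++ k :: r)).map x).prod = (p.map x).prod *
      (x k * ((q.map x).prod * x k * (q.map x).prod⁻¹)) * ((q.map x).prod * (r.map x).prod) := by
    simp only [List.map_append, List.map_cons, List.prod_append, List.prod_cons]; group
  have h₁ : (p.map x).prod * x k * ((q.map x).prod * (r.map x).prod) =
      ((p ++ k :: (q ++ r)).map x).prod := by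
    simp only [List.map_append, List.map_cons, List.prod_append, List.prod_cons]; group
  have h₂ : (p.map x).prod * ((q.map x).prod * (r.map x).prod) =
      ((p ++ (q ++ r)).map x).prod := by
    simp only [List.map_append, List.prod_append]
  have h₃ : (p.map x).prod * ((q.map x).prod * x k * (q.map x).prod⁻¹) *
      ((q.map x).prod * (r.map x).prod) = ((p ++ (q ++ k :: r)).map x).prod := by
    simp only [List.map_append, List.map_cons, List.prod_append, List.prod_cons]; group
  rw [hsplit, xConj_mul_mul i k _ _ hk (Subgroup.normalClosure_normal.conj_mem _ hk _),
    h₁, h₂, h₃]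
  refine mul_mem (mul_mem (shorter _ ?_ ?_) (inv_mem (shorter _ ?_ ?_))) (shorter _ ?_ ?_)
  all_goals first
    | simp only [List.length_append, List.length_cons] at hlen ⊢; omega
    | intro j; simp only [List.mem_append, List.mem_cons]; tauto

theorem xConj_mem_nodupConjSubgroup (i : Fin n) {T : Set (Fin n)} {v : RF n}
    (hv : v ∈ Subgroup.closure (x '' T)) : xConj i v ∈ nodupConjSubgroup i T := by
  suffices ∀ p : List (Fin n), (∀ k ∈ p, k ∈ T) →
      xConj i ((p.map x).prod * v) ∈ nodupConjSubgroup i T by simpa using this [] (by simp)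
  induction hv using Subgroup.closure_induction_left with
  | one => simpa using xConj_list_prod_mem_nodupConjSubgroup i
  | mul_left _ hk w _ ih =>
    obtain ⟨k, hk, rfl⟩ := hk
    intro p hp
    simpa [mul_assoc] using ih (p ++ [k]) (by simpa [or_imp, forall_and] using ⟨hp, hk⟩)
  | inv_mul_cancel _ hk w _ ih =>
    obtain ⟨k, hk, rfl⟩ := hk
    intro p hp
    rw [← mul_assoc, xConj_inv_mul i k _ _ (Subgroup.subset_normalClosure rfl)]
    have hpk := ih (p ++ [k]) (by simpa [or_imp, forall_and] using ⟨hp, hk⟩)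
    simp only [List.map_append, List.prod_append, List.map_cons, List.map_nil, List.prod_cons,
      List.prod_nil, mul_one] at hpk
    exact mul_mem (mul_mem (ih p hp) (inv_mem hpk)) (ih p hp)

theorem conj_mem_nodupConjSubgroup (i : Fin n) {T : Set (Fin n)} {u m : RF n}
    (hu : u ∈ Subgroup.closure (x '' T)) (hm : m ∈ nodupConjSubgroup i T) :
    u * m * u⁻¹ ∈ nodupConjSubgroup i T := by
  refine (Subgroup.closure_le ((nodupConjSubgroup i T).comap (MulAut.conj u).toMonoidHom)).mpr
    ?_ hm
  rintro _ ⟨w, rfl⟩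
  have hw : (w.1.map x).prod ∈ Subgroup.closure (x '' T) := list_prod_mem fun g hg => by
    obtain ⟨k, hk, rfl⟩ := List.mem_map.mp hg
    exact Subgroup.subset_closure ⟨k, w.2.2 k hk, rfl⟩
  simpa [xConj, mul_assoc] using xConj_mem_nodupConjSubgroup i (mul_mem hu hw)

theorem mul_inv_delete_mem_nodupConjSubgroup {i : Fin n} {T : Set (Fin n)} {c : RF n}
    (hc : c ∈ Subgroup.closure (x '' insert i T)) :
    c * (delete {i} c)⁻¹ ∈ nodupConjSubgroup i T := by
  induction hc using Subgroup.closure_induction with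
  | mem _ hk =>
    obtain ⟨k, -, rfl⟩ := hk
    rw [delete_x]
    split_ifs with hki
    · rw [Set.mem_singleton_iff.mp hki, inv_one, mul_one]
      exact Subgroup.subset_closure ⟨⟨[], by simp, by simp⟩, by simp [xConj]⟩
    · rw [mul_inv_cancel]; exact one_mem _
  | one => simp
  | mul g h hg _ ihg ihh =>
    have := conj_mem_nodupConjSubgroup i (delete_mem_closure hg) ihh
    convert mul_mem ihg this using 1
    simp only [map_mul]; group
  | inv g hg ih =>
    have := conj_mem_nodupConjSubgroup i (inv_mem (delete_mem_closure hg)) (inv_mem ih)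
    convert this using 1
    simp only [map_inv]; group

open scoped IsMulCommutative in
theorem toAdd_magnusLog_finsuppProd {ι : Type*} (i : Fin n) (w : ι → List (Fin n))
    (e : ι →₀ ℤ) :
    (magnusLog i (e.prod fun t k =>
        (⟨xConj i ((w t).map x).prod, xConj_mem_normalClosure i _⟩ :
          Subgroup.normalClosure {x i}) ^ k)).toAdd =
      Finsupp.linearCombination ℤ (fun t => ReducedRing.mk
        (wordExpansion (w t) * .single (.of i) 1 * wordInvExpansion (w t))) e := by
  rw [map_finsuppProd, Finsupp.linearCombination_apply, Finsupp.prod, Finsupp.sum, toAdd_prod]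
  refine Finset.sum_congr rfl fun t _ => ?_
  rw [map_zpow, magnusLog_xConj, toAdd_zpow, toAdd_ofAdd, magnus_list_prod, map_mul, map_mul,
    ReducedRing.mk_wordExpansion, ReducedRing.mk_wordInvExpansion]
  rfl

open scoped IsMulCommutative in
theorem eq_one_of_mem_nodupConjSubgroup_of_magnus_eq_one {i : Fin n} {T : Set (Fin n)}
    (hi : i ∉ T) {m : RF n} (hm : m ∈ nodupConjSubgroup i T) (hμ : magnus m = 1) : m = 1 := by
  let δ : NodupWord T → Subgroup.normalClosure {x i} :=
    fun w => ⟨xConj i (w.1.map x).prod, xConj_mem_normalClosure i _⟩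
  have hrange : Set.range (Subtype.val ∘ δ) =
      (Subgroup.normalClosure {x i}).subtype '' Set.range δ := Set.range_comp _ _
  rw [nodupConjSubgroup, show (fun w => xConj i (w.1.map x).prod) = Subtype.val ∘ δ from rfl,
    hrange, ← MonoidHom.map_closure] at hm
  obtain ⟨m', hm', rfl⟩ := hm
  obtain ⟨e, rfl⟩ := Subgroup.exists_finsupp_of_mem_closure_range δ m' hm'
  have hsum := toAdd_magnusLog_finsuppProd i (fun w => w.1) e
  rw [Subgroup.subtype_apply] at hμ
  rw [show magnusLog i (e.prod (δ · ^ ·)) = 1 by simp [magnusLog, hμ], toAdd_one] at hsum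
  have hindep := (ReducedRing.linearIndependent_conj_X i).comp
    (fun w : NodupWord T => ⟨w.1, w.2.1, fun h => hi (w.2.2 i h)⟩)
    fun w w' h => Subtype.ext congr($h.1)
  simp [linearIndependent_iff.mp hindep e hsum.symm]

theorem magnus_injective : Function.Injective (magnus : RF n →* (ReducedRing (Fin n))ˣ) := by
  rw [injective_iff_map_eq_one]
  suffices ∀ S : Finset (Fin n), ∀ c ∈ Subgroup.closure (x '' (S : Set (Fin n))),
      magnus c = 1 → c = 1 by
    intro c
    refine this Finset.univ c ?_
    rw [Finset.coe_univ, Set.image_univ, closure_range_x]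
    exact Subgroup.mem_top c
  intro S
  induction S using Finset.induction_on with
  | empty => simp
  | insert i S hi ih =>
    intro c hc hμ
    rw [Finset.coe_insert] at hc
    have hdel : delete {i} c = 1 :=
      ih _ (delete_mem_closure hc) (Units.ext (by rw [magnus_delete, hμ]; simp))
    have hm := mul_inv_delete_mem_nodupConjSubgroup hc
    rw [hdel, inv_one, mul_one] at hm
    exact eq_one_of_mem_nodupConjSubgroup_of_magnus_eq_one hi hm hμ

theorem magnus_eq_one_of_commute {j : Fin n} {c : RF n}
    (hc : c ∈ Subgroup.closure (x '' {j}ᶜ)) (hcomm : Commute c (x j)) : magnus c = 1 := by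
  obtain ⟨f, hf⟩ := ReducedRing.mk_surjective (magnus c : ReducedRing (Fin n))
  have hg : ReducedRing.mk (deleteLetters {j} f) = magnus c := by
    rw [← ReducedRing.delete_mk, hf, ← magnus_delete, delete_eq_self (by simp) hc]
  refine Units.ext <|
    hg ▸ ReducedRing.mk_eq_one_of_commute_X (deleteLetters_deleteLetters _ _) ?_ ?_
  · rw [hg]
    have h : Commute (magnus c : ReducedRing (Fin n)) (1 + ReducedRing.X j) := by
      simpa [magnus_x, ReducedRing.magnusUnit] using (hcomm.map magnus).units_val
    simpa using h.sub_right (Commute.one_right _)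
  · rw [hg]; exact delete_univ_magnus c

end RF

end

/-- Uniqueness of the conjugating element in the subgroup generated by the
generators other than `x j`. -/
theorem stmt5 (n : ℕ) (j : Fin n) (l l' : RF n)
    (hl : l ∈ Subgroup.closure {g : RF n | ∃ k : Fin n, k ≠ j ∧ g = x k})
    (hl' : l' ∈ Subgroup.closure {g : RF n | ∃ k : Fin n, k ≠ j ∧ g = x k})
    (h : l⁻¹ * x j * l = l'⁻¹ * x j * l') :
    l = l' := by
  have hgens : {g : RF n | ∃ k : Fin n, k ≠ j ∧ g = x k} = x '' {j}ᶜ := by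
    ext; simp [eq_comm]
  rw [hgens] at hl hl'
  have hcomm : Commute (l * l'⁻¹) (x j) := by
    calc l * l'⁻¹ * x j = l * (l'⁻¹ * x j * l') * l'⁻¹ := by group
      _ = l * (l⁻¹ * x j * l) * l'⁻¹ := by rw [h]
      _ = x j * (l * l'⁻¹) := by group
  have hμ := RF.magnus_eq_one_of_commute (mul_mem hl (inv_mem hl')) hcomm
  exact mul_inv_eq_one.mp (RF.magnus_injective (hμ.trans (map_one _).symm))
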